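/- (Proposition 3.5: the viscous boundary-layer set is contained in the entropy set.) Let f : ℝ^N → ℝ^N be C¹, let (U,F) be a convex entropy pair for f, and let u_B, v_∞ ∈ ℝ^N. Suppose v : [0,∞) → ℝ^N is differentiable, v(0) = u_B, v'(y) = f(v(y)) − f(v_∞) for all y ≥ 0, and v(y) → v_∞ as y → ∞. Then F(v_∞) − F(u_B) − ⟨∇U(u_B), f(v_∞) − f(u_B)⟩ ≤ 0. -/

import Mathlib

open Filter Topology

/-!
Along the boundary layer the relative entropy flux
`q(u) = F(v_∞) − F(u) − ⟨∇U(u), f(v_∞) − f(u)⟩` evolves by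
`(q ∘ v)' = ⟨v', ∇²U(v) v'⟩ ≥ 0`: the compatibility `∇F = Dfᵀ ∇U` cancels the first-order terms,
and `v' = f(v) − f(v_∞)` turns what is left into the Hessian quadratic form. So `q ∘ v` is
nondecreasing on `[0, ∞)` and tends to `q(v_∞) = 0`, whence `q(u_B) = q(v 0) ≤ 0`.
-/

section RelativeEntropyFlux

variable {E : Type*} [NormedAddCommGroup E] [NormedSpace ℝ E]

noncomputable def relativeEntropyFlux (f : E → E) (U F : E → ℝ) (w u : E) : ℝ :=
  F w - F u - fderiv ℝ U u (f w - f u)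

variable {f : E → E} {U F : E → ℝ}

@[simp]
theorem relativeEntropyFlux_self (w : E) : relativeEntropyFlux f U F w w = 0 := by
  simp [relativeEntropyFlux]

theorem continuous_relativeEntropyFlux (hf : Continuous f) (hU : Continuous (fderiv ℝ U))
    (hF : Continuous F) (w : E) : Continuous (relativeEntropyFlux f U F w) :=
  (continuous_const.sub hF).sub (hU.clm_apply (continuous_const.sub hf))

theorem HasDerivAt.relativeEntropyFlux_comp {w d : E} {v : ℝ → E} {y : ℝ}
    (hv : HasDerivAt v d y) (hEP : ∀ z, fderiv ℝ F (v y) z = fderiv ℝ U (v y) (fderiv ℝ f (v y) z))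
    (hf : DifferentiableAt ℝ f (v y)) (hU : DifferentiableAt ℝ (fderiv ℝ U) (v y))
    (hF : DifferentiableAt ℝ F (v y)) :
    HasDerivAt (fun t => relativeEntropyFlux f U F w (v t))
      (fderiv ℝ (fderiv ℝ U) (v y) d (f (v y) - f w)) y := by
  have hFv := hF.hasFDerivAt.comp_hasDerivAt y hv
  have hUv := hU.hasFDerivAt.comp_hasDerivAt y hv
  have hfv := (hasDerivAt_const y (f w)).sub (hf.hasFDerivAt.comp_hasDerivAt y hv)
  refine (((hasDerivAt_const y (F w)).sub hFv).sub (hUv.clm_apply hfv)).congr_deriv ?_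
  simp only [Function.comp_apply, Pi.sub_apply, hEP, zero_sub, map_neg, ← neg_sub (f (v y))]
  ring

end RelativeEntropyFlux

theorem fderiv_fderiv_apply_eq {E F : Type*} [NormedAddCommGroup E] [NormedSpace ℝ E]
    [NormedAddCommGroup F] [NormedSpace ℝ F] {U : E → F} {u : E}
    (hU : DifferentiableAt ℝ (fderiv ℝ U) u) (z z' : E) :
    fderiv ℝ (fun x => fderiv ℝ U x z) u z' = fderiv ℝ (fderiv ℝ U) u z' z := by
  simp [fderiv_clm_apply hU (differentiableAt_const z)]

theorem le_of_tendsto_of_hasDerivAt_nonneg {g g' : ℝ → ℝ} {a L : ℝ}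
    (hg : ∀ y, a ≤ y → HasDerivAt g (g' y) y) (hg' : ∀ y, a ≤ y → 0 ≤ g' y)
    (hlim : Tendsto g atTop (𝓝 L)) : g a ≤ L := by
  have hmono : MonotoneOn g (Set.Ici a) := by
    refine monotoneOn_of_hasDerivWithinAt_nonneg (convex_Ici a)
      (fun y hy => (hg y hy).continuousAt.continuousWithinAt)
      (fun y hy => (hg y (interior_subset hy)).hasDerivWithinAt)
      (fun y hy => hg' y (interior_subset hy))
  refine ge_of_tendsto hlim ?_
  filter_upwards [eventually_ge_atTop a] with y hy
  exact hmono Set.self_mem_Ici hy hy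

/-- `⟨∇U(u), z⟩` is `fderiv ℝ U u z` and the Hessian quadratic form `⟨z, ∇²U(u) z⟩` is
`fderiv ℝ (fun x => fderiv ℝ U x z) u z`. -/
theorem viscous_layer_subset_entropy_set {N : ℕ}
    (f : EuclideanSpace ℝ (Fin N) → EuclideanSpace ℝ (Fin N))
    (U F : EuclideanSpace ℝ (Fin N) → ℝ)
    (hf : ContDiff ℝ 1 f) (hU : ContDiff ℝ 2 U) (hF : ContDiff ℝ 2 F)
    (hEP : ∀ u w, fderiv ℝ F u w = fderiv ℝ U u (fderiv ℝ f u w))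
    (hconv : ∀ u w, 0 ≤ fderiv ℝ (fun x => fderiv ℝ U x w) u w)
    (uB vinf : EuclideanSpace ℝ (Fin N)) (v : ℝ → EuclideanSpace ℝ (Fin N))
    (hv0 : v 0 = uB)
    (hv : ∀ y : ℝ, 0 ≤ y → HasDerivAt v (f (v y) - f vinf) y)
    (hlim : Tendsto v atTop (nhds vinf)) :
    F vinf - F uB - fderiv ℝ U uB (f vinf - f uB) ≤ 0 := by
  have hf' : Differentiable ℝ f := hf.differentiable one_ne_zero
  have hF' : Differentiable ℝ F := hF.differentiable two_ne_zero
  have hU' : Differentiable ℝ (fderiv ℝ U) :=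
    (hU.fderiv_right (m := 1) le_rfl).differentiable one_ne_zero
  have hq_lim : Tendsto (relativeEntropyFlux f U F vinf ∘ v) atTop (𝓝 0) := by
    rw [← relativeEntropyFlux_self vinf]
    exact ((continuous_relativeEntropyFlux hf'.continuous hU'.continuous
      hF'.continuous vinf).tendsto vinf).comp hlim
  have hq_le := le_of_tendsto_of_hasDerivAt_nonneg
    (fun y hy => (hv y hy).relativeEntropyFlux_comp (hEP _) (hf' _) (hU' _) (hF' _))
    (fun y _ => fderiv_fderiv_apply_eq (hU' _) _ _ ▸ hconv _ _) hq_lim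
  simpa [relativeEntropyFlux, hv0] using hq_le
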